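/- A function f : (ZMod 2)^n → ZMod 2 has a non-zero b-shift s if and only if there is an (n−1)-dimensional subspace S of (ZMod 2)^n such that F̂(w) = 0 for all w outside the coset S + b·r (r any fixed vector outside S), equivalently F̂(w) = 0 whenever w·s ≠ b. -/

import Mathlib

/-! Write `χ a = (-1) ^ a`, so that `F̂ w = 2⁻ⁿ ∑ₓ χ (w ⬝ᵥ x + f x)`. If `s` is a `b`-shift and
`w ⬝ᵥ s = b + 1`, translating `x` by `s` flips the sign of every summand, hence `F̂ w = 0`.
Conversely, Fourier inversion `χ (f x) = ∑_w F̂ w χ (w ⬝ᵥ x)` together with `F̂` vanishing off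
`{w | w ⬝ᵥ s = b}` gives `χ (f (x + s)) = χ b χ (f x)`, and `χ` is injective. -/

noncomputable def fourierC (n : ℕ) (f : (Fin n → ZMod 2) → ZMod 2) (w : Fin n → ZMod 2) : ℝ :=
  (1 / 2 ^ n : ℝ) * ∑ x : Fin n → ZMod 2, (-1 : ℝ) ^ (((∑ i, w i * x i) + f x).val)

open Finset Matrix

theorem sum_eq_zero_of_map_add_eq_neg {G M : Type*} [AddGroup G] [Fintype G]
    [AddCommGroup M] [IsAddTorsionFree M] {φ : G → M} (s : G) (h : ∀ x, φ (x + s) = -φ x) :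
    ∑ x, φ x = 0 := by
  have hshift : ∑ x, φ (x + s) = ∑ x, φ x := Fintype.sum_equiv (Equiv.addRight s) _ _ fun _ ↦ rfl
  simp only [h, sum_neg_distrib] at hshift
  exact self_eq_neg.mp hshift.symm

lemma ZMod.add_eq_one_of_ne {a b : ZMod 2} (h : a ≠ b) : a + b = 1 := by
  revert a b; decide

/-- `a ↦ (-1) ^ a.val`, the character appearing in `fourierC`. -/
noncomputable def signChar : AddChar (ZMod 2) ℝ := AddChar.zmodChar 2 (ζ := -1) (by norm_num)

lemma signChar_one : signChar 1 = -1 := by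
  simp [signChar, AddChar.zmodChar_apply, ZMod.val_one]

lemma signChar_injective : Function.Injective signChar := by
  have h01 : ∀ a : ZMod 2, a = 0 ∨ a = 1 := by decide
  intro a b
  rcases h01 a with rfl | rfl <;> rcases h01 b with rfl | rfl <;>
    norm_num [signChar_one, AddChar.map_zero_eq_one]

lemma fourierC_eq_sum_signChar (n : ℕ) (f : (Fin n → ZMod 2) → ZMod 2) (w : Fin n → ZMod 2) :
    fourierC n f w = (2 ^ n)⁻¹ * ∑ x, signChar (w ⬝ᵥ x + f x) := by
  rw [fourierC, one_div]; rfl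

lemma sum_signChar_eq_zero_of_map_add {G : Type*} [AddGroup G] [Fintype G] {g : G → ZMod 2}
    (s : G) (h : ∀ x, g (x + s) = g x + 1) : ∑ x, signChar (g x) = 0 :=
  sum_eq_zero_of_map_add_eq_neg s fun x ↦ by
    rw [h, AddChar.map_add_eq_mul, signChar_one, mul_neg_one]

lemma sum_signChar_dotProduct_mul {n : ℕ} (y x : Fin n → ZMod 2) :
    ∑ w : Fin n → ZMod 2, signChar (w ⬝ᵥ y) * signChar (w ⬝ᵥ x) = if y = x then 2 ^ n else 0 := by
  simp only [← AddChar.map_add_eq_mul, ← dotProduct_add]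
  split_ifs with hyx
  · subst hyx
    simp [CharTwo.add_self_eq_zero]
  · obtain ⟨i, hi⟩ := Function.ne_iff.mp hyx
    refine sum_signChar_eq_zero_of_map_add (Pi.single i 1) fun w ↦ ?_
    rw [add_dotProduct, single_dotProduct, one_mul, Pi.add_apply, ZMod.add_eq_one_of_ne hi]

lemma sum_fourierC_mul_signChar (n : ℕ) (f : (Fin n → ZMod 2) → ZMod 2) (x : Fin n → ZMod 2) :
    ∑ w, fourierC n f w * signChar (w ⬝ᵥ x) = signChar (f x) :=
  calc ∑ w, fourierC n f w * signChar (w ⬝ᵥ x)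
      = (2 ^ n)⁻¹ * ∑ y : Fin n → ZMod 2, signChar (f y) *
          ∑ w : Fin n → ZMod 2, signChar (w ⬝ᵥ y) * signChar (w ⬝ᵥ x) := by
        simp only [fourierC_eq_sum_signChar, mul_assoc, ← mul_sum, sum_mul, AddChar.map_add_eq_mul]
        rw [sum_comm]
        simp only [mul_sum, mul_left_comm]
    _ = (2 ^ n)⁻¹ * (signChar (f x) * 2 ^ n) := by simp [sum_signChar_dotProduct_mul]
    _ = signChar (f x) := by field_simp

theorem bshift_iff_fourier_support_general (n : ℕ) (f : (Fin n → ZMod 2) → ZMod 2)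
    (s : Fin n → ZMod 2) (b : ZMod 2) :
    (∀ x, f (x + s) = f x + b) ↔
      (∀ w : Fin n → ZMod 2, (∑ i, w i * s i) ≠ b → fourierC n f w = 0) := by
  change _ ↔ ∀ w, w ⬝ᵥ s ≠ b → _
  constructor
  · intro hshift w hw
    have hws : w ⬝ᵥ s + b = 1 := ZMod.add_eq_one_of_ne hw
    rw [fourierC_eq_sum_signChar, sum_signChar_eq_zero_of_map_add s fun x ↦ ?_, mul_zero]
    rw [hshift, dotProduct_add]
    grind
  · intro hsupp x
    apply signChar_injective
    rw [← sum_fourierC_mul_signChar, AddChar.map_add_eq_mul, ← sum_fourierC_mul_signChar, sum_mul]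
    refine sum_congr rfl fun w _ ↦ ?_
    by_cases hw : w ⬝ᵥ s = b
    · rw [dotProduct_add, AddChar.map_add_eq_mul, hw]; ring
    · simp [hsupp w hw]

theorem bshift_iff_fourier_support (n : ℕ) (f : (Fin n → ZMod 2) → ZMod 2)
    (s : Fin n → ZMod 2) (b : ZMod 2) (hs : s ≠ 0) :
    (∀ x, f (x + s) = f x + b) ↔
      (∀ w : Fin n → ZMod 2, (∑ i, w i * s i) ≠ b → fourierC n f w = 0) :=
  bshift_iff_fourier_support_general n f s b
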